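/- arXiv:2106.14770 — 8 statements merged into one kernel-verified Lean document; each statement's English description precedes it below -/
import Mathlib

section
/- For all positive integers m, n, N, the sum over i from 1 to N of (-1)^(m(i-1)) / (F_{m(i-1)+n} * F_{m(i+1)+n}) equals (1/(F_n * F_{2m})) * (F_{m(N+1)}/F_{m(N+1)+n} + F_{mN}/F_{mN+n} - F_m/F_{m+n}). -/
/-!
By Vajda's identity `F_{a+k} F_{a+n} - F_a F_{a+k+n} = (-1)^a F_k F_n`, with `a = m(i-1)` and
`k = 2m` the `i`-th summand equals `(g(i+1) - g(i-1)) / (F_n F_{2m})` for `g(i) = F_{mi} / F_{mi+n}`,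
so the sum telescopes in steps of two; `g(0) = 0`.
-/

open Finset

theorem Int.fib_add_one_eq_fib_sub_one_add_fib (n : ℤ) : fib (n + 1) = fib (n - 1) + fib n := by
  rw [show n + 1 = n - 1 + 2 by ring, fib_add_two, sub_add_cancel]

/-- Vajda's identity. -/
theorem Int.fib_add_mul_fib_add_sub_fib_mul_fib_add_add (a i j : ℤ) :
    fib (a + i) * fib (a + j) - fib a * fib (a + i + j) = (-1) ^ a.natAbs * fib i * fib j := by
  -- expand everything in `F(a-1), F(a), F(i-1), F(i), F(j), F(j+1)`; Cassini closes it
  have hcassini := fib_succ_mul_fib_pred_sub_fib_sq a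
  rw [fib_add_one_eq_fib_sub_one_add_fib] at hcassini
  rw [add_assoc, fib_add a i, fib_add a j, fib_add a (i + j), fib_add i j,
    show i + j + 1 = i + (j + 1) by ring, fib_add i (j + 1), add_assoc j, one_add_one_eq_two,
    fib_add_two, fib_add_one_eq_fib_sub_one_add_fib i]
  linear_combination (fib i * fib j) * hcassini

theorem Nat.fib_add_mul_fib_add_sub_fib_mul_fib_add_add (a i j : ℕ) :
    (fib (a + i) * fib (a + j) - fib a * fib (a + i + j) : ℤ) = (-1) ^ a * fib i * fib j := by
  simpa only [← Nat.cast_add, Int.fib_natCast, Int.natAbs_natCast] using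
    Int.fib_add_mul_fib_add_sub_fib_mul_fib_add_add a i j

theorem Nat.neg_one_pow_div_fib_mul_fib_eq {K : Type*} [Field K] [CharZero K] (a k n : ℕ)
    (hk : k ≠ 0) (hn : n ≠ 0) :
    (-1 : K) ^ a / (fib (a + n) * fib (a + k + n)) =
      1 / (fib n * fib k) * (fib (a + k) / fib (a + k + n) - fib a / fib (a + n)) := by
  have hvajda : (fib (a + k) * fib (a + n) - fib a * fib (a + k + n) : K) =
      (-1) ^ a * fib k * fib n := by
    exact_mod_cast fib_add_mul_fib_add_sub_fib_mul_fib_add_add a k n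
  have : (fib n : K) ≠ 0 := by simpa
  have : (fib k : K) ≠ 0 := by simpa
  have : (fib (a + n) : K) ≠ 0 := by simp [hn]
  have : (fib (a + k + n) : K) ≠ 0 := by simp [hn]
  field_simp
  linear_combination -hvajda

theorem Finset.sum_Icc_one_succ_sub_pred {M : Type*} [AddCommGroup M] (f : ℕ → M) (N : ℕ) :
    ∑ i ∈ Icc 1 N, (f (i + 1) - f (i - 1)) = f (N + 1) + f N - f 1 - f 0 := by
  induction N with
  | zero => simp
  | succ N ih =>
    rw [sum_Icc_succ_top (by omega), ih, Nat.add_sub_cancel]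
    abel

theorem stmt_0_general (m n N : ℕ) (hm : 0 < m) (hn : 0 < n) :
    ∑ i ∈ Finset.Icc 1 N,
      ((-1 : ℚ) ^ (m * (i - 1)) /
        ((Nat.fib (m * (i - 1) + n) : ℚ) * (Nat.fib (m * (i + 1) + n) : ℚ)))
    = (1 / ((Nat.fib n : ℚ) * (Nat.fib (2 * m) : ℚ))) *
        ((Nat.fib (m * (N + 1)) : ℚ) / (Nat.fib (m * (N + 1) + n) : ℚ)
          + (Nat.fib (m * N) : ℚ) / (Nat.fib (m * N + n) : ℚ)
          - (Nat.fib m : ℚ) / (Nat.fib (m + n) : ℚ)) := by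
  set g : ℕ → ℚ := fun i ↦ Nat.fib (m * i) / Nat.fib (m * i + n)
  have hterm : ∀ i ∈ Icc 1 N, (-1 : ℚ) ^ (m * (i - 1)) /
      ((Nat.fib (m * (i - 1) + n) : ℚ) * (Nat.fib (m * (i + 1) + n) : ℚ)) =
      1 / ((Nat.fib n : ℚ) * (Nat.fib (2 * m) : ℚ)) * (g (i + 1) - g (i - 1)) := by
    intro i hi
    have hshift : m * (i + 1) = m * (i - 1) + 2 * m := by
      obtain ⟨j, rfl⟩ : ∃ j, i = j + 1 := ⟨i - 1, by grind⟩
      simp only [Nat.add_sub_cancel]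
      ring
    simp only [g, hshift]
    exact Nat.neg_one_pow_div_fib_mul_fib_eq _ _ _ (by omega) (by omega)
  rw [sum_congr rfl hterm, ← mul_sum, sum_Icc_one_succ_sub_pred]
  simp [g]

theorem stmt_0 (m n N : ℕ) (hm : 0 < m) (hn : 0 < n) (hN : 0 < N) :
    ∑ i ∈ Finset.Icc 1 N,
      ((-1 : ℚ) ^ (m * (i - 1)) /
        ((Nat.fib (m * (i - 1) + n) : ℚ) * (Nat.fib (m * (i + 1) + n) : ℚ)))
    = (1 / ((Nat.fib n : ℚ) * (Nat.fib (2 * m) : ℚ))) *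
        ((Nat.fib (m * (N + 1)) : ℚ) / (Nat.fib (m * (N + 1) + n) : ℚ)
          + (Nat.fib (m * N) : ℚ) / (Nat.fib (m * N + n) : ℚ)
          - (Nat.fib m : ℚ) / (Nat.fib (m + n) : ℚ)) :=
  stmt_0_general m n N hm hn
end

section
/- For all positive integers m, n, N, the sum over i from 1 to N of (-1)^(m(i-1)) / (L_{m(i-1)+n} * L_{m(i+1)+n}) equals (1/(5 * F_n * F_{2m})) * (2/L_n + L_m/L_{m+n} - L_{mN}/L_{mN+n} - L_{m(N+1)}/L_{m(N+1)+n}). -/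
/-! The shift identity `L_b L_{b+q+p} - L_{b+p} L_{b+q} = (-1)^b 5 F_p F_q` turns the summand with
`b = m(i-1)`, `q = 2m`, `p = n` into `(T_{i-1} - T_{i+1}) / (5 F_n F_{2m})` for
`T_j = L_{mj} / L_{mj+n}`, so the sum telescopes. Up to replacing `5 F_p F_q` by
`G_0 G_{q+p} - G_p G_q`, the shift identity holds for every solution `G` of the Fibonacci
recurrence: the one-step relation between `b + 1` and `b` is, as a function of `p`, again a
solution of the recurrence, and it holds at `p = 0, 1`. -/

def lucas : ℕ → ℕ
  | 0 => 2
  | 1 => 1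
  | n + 2 => lucas (n + 1) + lucas n

def IsFibLike {R : Type*} [Add R] (u : ℕ → R) : Prop :=
  ∀ k, u (k + 2) = u (k + 1) + u k

namespace IsFibLike

variable {R : Type*} [CommRing R] {G : ℕ → R}

theorem mul_sub_mul_succ (hG : IsFibLike G) (b q p : ℕ) :
    G (b + 1) * G (b + 1 + q + p) - G (b + 1 + p) * G (b + 1 + q)
      = -(G b * G (b + q + p) - G (b + p) * G (b + q)) := by
  induction p using Nat.twoStepInduction with
  | zero => simp
  | one => linear_combination (norm := ring_nf) G (b + 1) * hG (b + q) - G (b + 1 + q) * hG b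
  | more k ih0 ih1 =>
    simp only [← add_assoc] at *
    linear_combination ih0 + ih1 + G (b + 1) * hG (b + 1 + q + k) - G (b + 1 + q) * hG (b + 1 + k)
      + G b * hG (b + q + k) - G (b + q) * hG (b + k)

theorem mul_sub_mul (hG : IsFibLike G) (b q p : ℕ) :
    G b * G (b + q + p) - G (b + p) * G (b + q)
      = (-1) ^ b * (G 0 * G (q + p) - G p * G q) := by
  induction b with
  | zero => simp
  | succ b ih => rw [hG.mul_sub_mul_succ, ih, pow_succ]; ring

end IsFibLike

section

variable {R : Type*} [CommRing R]

theorem isFibLike_lucas : IsFibLike (fun k => (lucas k : R)) := fun k => by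
  simp [lucas]

theorem isFibLike_fib : IsFibLike (fun k => (Nat.fib k : R)) := fun k => by
  simp [Nat.fib_add_two, add_comm]

theorem two_mul_lucas_succ (n : ℕ) :
    2 * (lucas (n + 1) : R) = lucas n + 5 * Nat.fib n := by
  induction n using Nat.twoStepInduction with
  | zero => norm_num [lucas]
  | one => norm_num [lucas]
  | more k ih0 ih1 =>
    linear_combination ih0 + ih1 + 2 * isFibLike_lucas (R := R) (k + 1)
      - isFibLike_lucas (R := R) k - 5 * isFibLike_fib (R := R) k

theorem two_mul_lucas_add (q p : ℕ) :
    2 * (lucas (q + p) : R) = lucas p * lucas q + 5 * Nat.fib p * Nat.fib q := by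
  induction p using Nat.twoStepInduction with
  | zero => norm_num [lucas]
  | one => norm_num [lucas]; linear_combination two_mul_lucas_succ (R := R) q
  | more k ih0 ih1 =>
    simp only [← add_assoc] at *
    linear_combination ih0 + ih1 + 2 * isFibLike_lucas (R := R) (q + k)
      - lucas q * isFibLike_lucas (R := R) k - 5 * Nat.fib q * isFibLike_fib (R := R) k

theorem lucas_mul_lucas_sub (b q p : ℕ) :
    (lucas b : R) * lucas (b + q + p) - lucas (b + p) * lucas (b + q)
      = (-1) ^ b * (5 * Nat.fib p * Nat.fib q) := by
  rw [(isFibLike_lucas (R := R)).mul_sub_mul, show lucas 0 = 2 from rfl, Nat.cast_ofNat]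
  linear_combination (-1 : R) ^ b * two_mul_lucas_add (R := R) q p

end

theorem lucas_pos (k : ℕ) : 0 < lucas k := by
  induction k using Nat.twoStepInduction with
  | zero => decide
  | one => decide
  | more k ih0 ih1 => exact Nat.add_pos_left ih1 _

theorem lucas_div_sub_lucas_div {K : Type*} [Field K] [CharZero K] (b d n : ℕ) :
    (lucas b : K) / lucas (b + n) - lucas (b + d) / lucas (b + d + n)
      = (-1) ^ b * (5 * Nat.fib n * Nat.fib d) / (lucas (b + n) * lucas (b + d + n)) := by
  have hL (k : ℕ) : (lucas k : K) ≠ 0 := by exact_mod_cast (lucas_pos k).ne'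
  rw [div_sub_div _ _ (hL _) (hL _), ← lucas_mul_lucas_sub]

theorem sum_Icc_sub_shift_two {M : Type*} [AddCommGroup M] (T : ℕ → M) (N : ℕ) :
    ∑ i ∈ Finset.Icc 1 N, (T (i - 1) - T (i + 1)) = T 0 + T 1 - T N - T (N + 1) := by
  induction N with
  | zero => simp
  | succ N ih =>
    rw [Finset.sum_Icc_succ_top (by omega), ih, Nat.add_sub_cancel]
    abel

theorem stmt_1_general (m n N : ℕ) (hm : 0 < m) (hn : 0 < n) :
    ∑ i ∈ Finset.Icc 1 N,
      ((-1 : ℚ) ^ (m * (i - 1)) /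
        ((lucas (m * (i - 1) + n) : ℚ) * (lucas (m * (i + 1) + n) : ℚ)))
    = (1 / (5 * (Nat.fib n : ℚ) * (Nat.fib (2 * m) : ℚ))) *
        (2 / (lucas n : ℚ) + (lucas m : ℚ) / (lucas (m + n) : ℚ)
          - (lucas (m * N) : ℚ) / (lucas (m * N + n) : ℚ)
          - (lucas (m * (N + 1)) : ℚ) / (lucas (m * (N + 1) + n) : ℚ)) := by
  set T : ℕ → ℚ := fun j => lucas (m * j) / lucas (m * j + n)
  have hFn : (Nat.fib n : ℚ) ≠ 0 := by exact_mod_cast (Nat.fib_pos.2 hn).ne'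
  have hF2m : (Nat.fib (2 * m) : ℚ) ≠ 0 := by exact_mod_cast (Nat.fib_pos.2 (by omega)).ne'
  have summand : ∀ i ∈ Finset.Icc 1 N,
      (-1 : ℚ) ^ (m * (i - 1)) / (lucas (m * (i - 1) + n) * lucas (m * (i + 1) + n))
        = 1 / (5 * Nat.fib n * Nat.fib (2 * m)) * (T (i - 1) - T (i + 1)) := by
    intro i hi
    obtain ⟨j, rfl⟩ : ∃ j, i = j + 1 := ⟨i - 1, by grind⟩
    have hidx : m * (j + 1 + 1) = m * j + 2 * m := by ring
    simp only [T, Nat.add_sub_cancel, hidx, lucas_div_sub_lucas_div]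
    field_simp
  rw [Finset.sum_congr rfl summand, ← Finset.mul_sum, sum_Icc_sub_shift_two]
  simp [T, lucas]

theorem stmt_1 (m n N : ℕ) (hm : 0 < m) (hn : 0 < n) (hN : 0 < N) :
    ∑ i ∈ Finset.Icc 1 N,
      ((-1 : ℚ) ^ (m * (i - 1)) /
        ((lucas (m * (i - 1) + n) : ℚ) * (lucas (m * (i + 1) + n) : ℚ)))
    = (1 / (5 * (Nat.fib n : ℚ) * (Nat.fib (2 * m) : ℚ))) *
        (2 / (lucas n : ℚ) + (lucas m : ℚ) / (lucas (m + n) : ℚ)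
          - (lucas (m * N) : ℚ) / (lucas (m * N + n) : ℚ)
          - (lucas (m * (N + 1)) : ℚ) / (lucas (m * (N + 1) + n) : ℚ)) :=
  stmt_1_general m n N hm hn
end

section
/- For all positive integers m and n, the infinite series sum over i >= 1 of (-1)^(m(i-1)) / (F_{m(i-1)+n} * F_{m(i+1)+n}) converges to (1/(F_n * F_{2m})) * (2/Φ^n - F_m/F_{m+n}), where Φ = (1+√5)/2. -/
/-!
Write `a = m i + n`. By Binet's formula, `F (a + b) ψ^a - ψ^(a + b) F a = (-1)^a F b`, so with
`u k = ψ^k / F k` the `i`-th term equals `(-1)^n / F (2m) · (u a - u (a + 2m))`. The series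
`∑ u (m i + n)` converges absolutely because `|ψ| < 1`, so the series telescopes to
`(-1)^n / F (2m) · (u n + u (m + n))`, and `F (m + n) = F m φ^n + ψ^m F n` together with
`φ ψ = -1` turns this into the stated closed form.
-/

open Real goldenRatio Finset

theorem Summable.hasSum_sub_comp_add {G : Type*} [AddCommGroup G] [TopologicalSpace G]
    [IsTopologicalAddGroup G] {u : ℕ → G} (hu : Summable u) (k : ℕ) :
    HasSum (fun i => u i - u (i + k)) (∑ i ∈ range k, u i) := by
  simpa using hu.hasSum.sub ((hasSum_nat_add_iff' k).2 hu.hasSum)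

lemma coe_fib_add (m n : ℕ) :
    (Nat.fib (m + n) : ℝ) = Nat.fib m * φ ^ n + ψ ^ m * Nat.fib n := by
  simp only [coe_fib_eq, pow_add]
  ring

lemma fib_add_mul_goldenConj_pow_sub (a b : ℕ) :
    (Nat.fib (a + b) : ℝ) * ψ ^ a - ψ ^ (a + b) * Nat.fib a = (-1) ^ a * Nat.fib b := by
  simp only [coe_fib_eq, ← goldenRatio_mul_goldenConj, mul_pow, pow_add]
  ring

lemma goldenConj_pow_div_fib_sub {a b : ℕ} (ha : Nat.fib a ≠ 0) (hab : Nat.fib (a + b) ≠ 0) :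
    ψ ^ a / Nat.fib a - ψ ^ (a + b) / Nat.fib (a + b)
      = (-1) ^ a * Nat.fib b / (Nat.fib a * Nat.fib (a + b)) := by
  rw [← fib_add_mul_goldenConj_pow_sub]
  field_simp

lemma abs_goldenConj_lt_one : |ψ| < 1 :=
  abs_lt.2 ⟨neg_one_lt_goldenConj, goldenConj_neg.trans one_pos⟩

lemma summable_goldenConj_pow_div_fib : Summable fun k : ℕ => ψ ^ k / Nat.fib k := by
  refine .of_norm_bounded (summable_geometric_of_lt_one (abs_nonneg ψ) abs_goldenConj_lt_one)
    fun k => ?_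
  rcases Nat.eq_zero_or_pos k with rfl | hk
  · simp
  rw [norm_div, norm_pow, Real.norm_eq_abs, Real.norm_natCast]
  exact div_le_self (by positivity) (Nat.one_le_cast.2 (Nat.fib_pos.2 hk))

lemma neg_one_pow_div_fib_mul_fib_eq_mul_sub {m n i : ℕ} (ha : Nat.fib (m * i + n) ≠ 0)
    (hb : Nat.fib (m * (i + 2) + n) ≠ 0) (h2m : Nat.fib (2 * m) ≠ 0) :
    (-1 : ℝ) ^ (m * i) / (Nat.fib (m * i + n) * Nat.fib (m * (i + 2) + n))
      = (-1) ^ n / Nat.fib (2 * m) * (ψ ^ (m * i + n) / Nat.fib (m * i + n)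
          - ψ ^ (m * (i + 2) + n) / Nat.fib (m * (i + 2) + n)) := by
  have hidx : m * (i + 2) + n = (m * i + n) + 2 * m := by ring
  have hsq : ((-1 : ℝ) ^ n) * (-1) ^ n = 1 := by rw [← mul_pow]; norm_num
  rw [hidx] at hb ⊢
  rw [goldenConj_pow_div_fib_sub ha hb, pow_add, ← mul_div_assoc]
  congr 1
  rw [div_mul_eq_mul_div, eq_div_iff (Nat.cast_ne_zero.2 h2m)]
  linear_combination (-(-1 : ℝ) ^ (m * i) * Nat.fib (2 * m)) * hsq

lemma neg_one_pow_div_fib_mul_add_eq {m n : ℕ} (hn : Nat.fib n ≠ 0)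
    (hmn : Nat.fib (m + n) ≠ 0) (h2m : Nat.fib (2 * m) ≠ 0) :
    (-1 : ℝ) ^ n / Nat.fib (2 * m) * (ψ ^ n / Nat.fib n + ψ ^ (m + n) / Nat.fib (m + n))
      = 1 / ((Nat.fib n : ℝ) * Nat.fib (2 * m)) *
          (2 / ((1 + √5) / 2) ^ n - Nat.fib m / Nat.fib (m + n)) := by
  have hprod : φ ^ n * ψ ^ n = (-1) ^ n := by rw [← mul_pow, goldenRatio_mul_goldenConj]
  have hsq : ((-1 : ℝ) ^ n) * (-1) ^ n = 1 := by rw [← mul_pow]; norm_num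
  have hφ : φ ^ n ≠ 0 := pow_ne_zero n goldenRatio_ne_zero
  rw [← goldenRatio, pow_add]
  field_simp
  linear_combination ((-1) ^ n * (Nat.fib (m + n) + Nat.fib n * ψ ^ m)) * hprod
    + (Nat.fib (m + n) + Nat.fib n * ψ ^ m : ℝ) * hsq - coe_fib_add m n

theorem stmt_2 (m n : ℕ) (hm : 0 < m) (hn : 0 < n) :
    HasSum (fun i : ℕ =>
      (-1 : ℝ) ^ (m * i) /
        ((Nat.fib (m * i + n) : ℝ) * (Nat.fib (m * (i + 2) + n) : ℝ)))
      ((1 / ((Nat.fib n : ℝ) * (Nat.fib (2 * m) : ℝ))) *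
        (2 / ((1 + Real.sqrt 5) / 2) ^ n
          - (Nat.fib m : ℝ) / (Nat.fib (m + n) : ℝ))) := by
  have hfib : ∀ k, 0 < k → Nat.fib k ≠ 0 := fun k hk => (Nat.fib_pos.2 hk).ne'
  have hu : Summable fun i : ℕ => ψ ^ (m * i + n) / Nat.fib (m * i + n) :=
    summable_goldenConj_pow_div_fib.comp_injective fun i j h => by
      simpa [hm.ne'] using h
  have htel := (hu.hasSum_sub_comp_add 2).mul_left ((-1 : ℝ) ^ n / Nat.fib (2 * m))
  simp only [sum_range_succ, sum_range_zero, zero_add, mul_zero, mul_one] at htel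
  rw [← neg_one_pow_div_fib_mul_add_eq (hfib n hn) (hfib _ (by omega))
    (hfib _ (by omega))]
  exact htel.congr_fun fun i => neg_one_pow_div_fib_mul_fib_eq_mul_sub
    (hfib _ (by positivity)) (hfib _ (by positivity)) (hfib _ (by omega))
end

section
/- For all positive integers m and N, the sum over i from 1 to N of (-1)^(m(i-1)) / (L_{m(i-1)} * L_{m(i+1)}) equals (1/(5 * F_{2m})) * (L_{m(N+1)+1}/L_{m(N+1)} + L_{mN+1}/L_{mN} - L_{m+1}/L_m - 1/2). -/
/-! Each summand is `(ρ(m(i+1)) - ρ(m(i-1))) / (5 F_{2m})` for the ratio `ρ n = L_{n+1} / L_n`,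
by the d'Ocagne-type identity `L_{b+d+1} L_b - L_{b+1} L_{b+d} = 5 (-1)^b F_d`. The sum therefore
telescopes with step two, leaving `ρ(m(N+1)) + ρ(mN) - ρ(m) - ρ(0)`, and `ρ 0 = 1/2`. -/

lemma lucas_pos_s4 : ∀ n, 0 < lucas n
  | 0 => by simp [lucas]
  | 1 => by simp [lucas]
  | n + 2 => by rw [lucas]; exact Nat.add_pos_left (lucas_pos_s4 (n + 1)) _

lemma two_mul_lucas_succ_sub_lucas : ∀ d, 2 * (lucas (d + 1) : ℤ) - lucas d = 5 * Nat.fib d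
  | 0 => by simp [lucas]
  | 1 => by simp [lucas]
  | d + 2 => by
    have h₀ := two_mul_lucas_succ_sub_lucas d
    have h₁ := two_mul_lucas_succ_sub_lucas (d + 1)
    push_cast [lucas, Nat.fib_add_two] at h₀ h₁ ⊢
    linarith

lemma lucas_add_succ_mul_lucas_sub (b d : ℕ) :
    (lucas (b + d + 1) : ℤ) * lucas b - lucas (b + 1) * lucas (b + d)
      = (-1) ^ b * 5 * Nat.fib d := by
  induction b with
  | zero =>
    push_cast [lucas, zero_add, pow_zero]
    linarith [two_mul_lucas_succ_sub_lucas d]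
  | succ b ih =>
    rw [show b + 1 + d + 1 = b + d + 2 by ring, show b + 1 + d = b + d + 1 by ring]
    push_cast [lucas, pow_succ] at ih ⊢
    linear_combination -ih

def lucasRatio (n : ℕ) : ℚ := lucas (n + 1) / lucas n

lemma lucasRatio_zero : lucasRatio 0 = 1 / 2 := by
  simp [lucasRatio, lucas]

lemma neg_one_pow_div_lucas_mul_lucas (b : ℕ) {k : ℕ} (hk : 0 < k) :
    (-1 : ℚ) ^ b / (lucas b * lucas (b + k))
      = (lucasRatio (b + k) - lucasRatio b) / (5 * Nat.fib k) := by
  have hb : (lucas b : ℚ) ≠ 0 := by exact_mod_cast (lucas_pos_s4 b).ne'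
  have hbk : (lucas (b + k) : ℚ) ≠ 0 := by exact_mod_cast (lucas_pos_s4 (b + k)).ne'
  have hf : (Nat.fib k : ℚ) ≠ 0 := by exact_mod_cast (Nat.fib_pos.mpr hk).ne'
  have h : (lucas (b + k + 1) : ℚ) * lucas b - lucas (b + 1) * lucas (b + k)
      = (-1) ^ b * 5 * Nat.fib k := by exact_mod_cast lucas_add_succ_mul_lucas_sub b k
  rw [lucasRatio, lucasRatio]
  field_simp
  linear_combination -h

lemma sum_range_add_two_sub {G : Type*} [AddCommGroup G] (g : ℕ → G) (n : ℕ) :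
    ∑ i ∈ Finset.range n, (g (i + 2) - g i) = g (n + 1) + g n - g 1 - g 0 := by
  have h := Finset.sum_range_sub (fun i ↦ g (i + 1) + g i) n
  convert h using 1
  · exact Finset.sum_congr rfl fun i _ ↦ by abel
  · abel

theorem stmt_4_general (m N : ℕ) (hm : 0 < m) :
    ∑ i ∈ Finset.Icc 1 N,
      ((-1 : ℚ) ^ (m * (i - 1)) /
        ((lucas (m * (i - 1)) : ℚ) * (lucas (m * (i + 1)) : ℚ)))
    = (1 / (5 * (Nat.fib (2 * m) : ℚ))) *
        ((lucas (m * (N + 1) + 1) : ℚ) / (lucas (m * (N + 1)) : ℚ)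
          + (lucas (m * N + 1) : ℚ) / (lucas (m * N) : ℚ)
          - (lucas (m + 1) : ℚ) / (lucas m : ℚ) - 1 / 2) := by
  have summand (i : ℕ) :
      (-1 : ℚ) ^ (m * i) / (lucas (m * i) * lucas (m * (i + 2)))
        = (lucasRatio (m * (i + 2)) - lucasRatio (m * i)) / (5 * Nat.fib (2 * m)) := by
    rw [show m * (i + 2) = m * i + 2 * m by ring]
    exact neg_one_pow_div_lucas_mul_lucas _ (by omega)
  rw [← Finset.Ico_add_one_right_eq_Icc, Finset.sum_Ico_eq_sum_range, Nat.add_sub_cancel]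
  have shift (x : ℕ) : 1 + x - 1 = x ∧ 1 + x + 1 = x + 2 := by omega
  simp only [shift, summand, ← Finset.sum_div, sum_range_add_two_sub (fun i ↦ lucasRatio (m * i)),
    mul_one, mul_zero, lucasRatio_zero]
  rw [lucasRatio, lucasRatio, lucasRatio, one_div_mul_eq_div]

theorem stmt_4 (m N : ℕ) (hm : 0 < m) (hN : 0 < N) :
    ∑ i ∈ Finset.Icc 1 N,
      ((-1 : ℚ) ^ (m * (i - 1)) /
        ((lucas (m * (i - 1)) : ℚ) * (lucas (m * (i + 1)) : ℚ)))
    = (1 / (5 * (Nat.fib (2 * m) : ℚ))) *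
        ((lucas (m * (N + 1) + 1) : ℚ) / (lucas (m * (N + 1)) : ℚ)
          + (lucas (m * N + 1) : ℚ) / (lucas (m * N) : ℚ)
          - (lucas (m + 1) : ℚ) / (lucas m : ℚ) - 1 / 2) :=
  stmt_4_general m N hm
end

section
/- For all positive integers m and n, the infinite series sum over i >= 1 of 1/(F_{2m(i-1)+n} * F_{2m(i+1)+n}) converges to (1/(F_n * F_{4m})) * (2/Φ^n - F_{2m}/F_{2m+n}), where Φ = (1+√5)/2. -/
/-!
By d'Ocagne's identity `F_{j+k} F_{j+1} - F_{j+k+1} F_j = (-1)^j F_k`, the ratios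
`r_j = F_{j+1}/F_j` satisfy `r_j - r_{j+k} = (-1)^j F_k / (F_j F_{j+k})`. With `j = 2mi + n`
and `k = 4m` the sign is `(-1)^n` for every `i`, so the series telescopes with step two, and as
`r_j → Φ` its sum is `(-1)^n / F_{4m} * ((r_n - Φ) + (r_{n+2m} - Φ))`. Binet's formula gives
`r_n - Φ = ψ^n / F_n`, and d'Ocagne again relates `r_{n+2m}` to `r_n`.
-/

open Filter Finset Real
open scoped goldenRatio Topology

section Telescoping

variable {G : Type*} [AddCommGroup G]

lemma sum_range_sub_add_eq_sum_range_sub (u : ℕ → G) (k N : ℕ) :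
    ∑ i ∈ range N, (u i - u (i + k)) = ∑ i ∈ range k, (u i - u (N + i)) := by
  have h := (sum_range_add u N k).symm.trans (add_comm N k ▸ sum_range_add u k N)
  simp only [sum_sub_distrib, add_comm _ k]
  exact sub_eq_sub_iff_add_eq_add.2 h

lemma tendsto_sum_range_sub_add [TopologicalSpace G] [IsTopologicalAddGroup G] {u : ℕ → G}
    {L : G} (hu : Tendsto u atTop (𝓝 L)) (k : ℕ) :
    Tendsto (fun N ↦ ∑ i ∈ range N, (u i - u (i + k))) atTop
      (𝓝 (∑ i ∈ range k, (u i - L))) := by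
  simp only [sum_range_sub_add_eq_sum_range_sub u k]
  exact tendsto_finsetSum _ fun i _ ↦
    tendsto_const_nhds.sub (hu.comp (tendsto_add_atTop_nat i))

end Telescoping

lemma Nat.fib_add_mul_fib_succ_sub_fib_add_succ_mul_fib {R : Type*} [CommRing R] (k j : ℕ) :
    ((j + k).fib : R) * (j + 1).fib - (j + k + 1).fib * j.fib = (-1) ^ j * k.fib := by
  induction j with
  | zero => simp
  | succ j ih =>
    rw [show j + 1 + k = j + k + 1 by ring]
    push_cast [Nat.fib_add_two]
    linear_combination -ih

noncomputable def fibRatio (j : ℕ) : ℝ := (j + 1).fib / j.fib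

lemma fibRatio_sub_fibRatio_add {j : ℕ} (hj : 0 < j) (k : ℕ) :
    fibRatio j - fibRatio (j + k) = (-1) ^ j * k.fib / (j.fib * (j + k).fib) := by
  have hFj : (j.fib : ℝ) ≠ 0 := Nat.cast_ne_zero.2 (Nat.fib_pos.2 hj).ne'
  have hFjk : ((j + k).fib : ℝ) ≠ 0 := Nat.cast_ne_zero.2 (Nat.fib_pos.2 (by omega)).ne'
  rw [fibRatio, fibRatio, div_sub_div _ _ hFj hFjk,
    ← Nat.fib_add_mul_fib_succ_sub_fib_add_succ_mul_fib]
  ring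

lemma fibRatio_sub_goldenRatio {j : ℕ} (hj : 0 < j) : fibRatio j - φ = ψ ^ j / j.fib := by
  have hFj : (j.fib : ℝ) ≠ 0 := Nat.cast_ne_zero.2 (Nat.fib_pos.2 hj).ne'
  rw [fibRatio, ← fib_succ_sub_goldenRatio_mul_fib]
  field_simp

lemma tendsto_fibRatio : Tendsto fibRatio atTop (𝓝 φ) := by
  have hfib : Tendsto (fun j : ℕ ↦ (j.fib : ℝ)) atTop atTop :=
    tendsto_natCast_atTop_atTop.comp <| tendsto_atTop_atTop.2 fun b ↦
      ⟨b + 1, fun j hj ↦ by have := Nat.le_fib_add_one j; omega⟩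
  have hψ : |ψ| < 1 := abs_lt.2 ⟨neg_one_lt_goldenConj, goldenConj_neg.trans one_pos⟩
  have hrem : Tendsto (fun j : ℕ ↦ ψ ^ j / j.fib) atTop (𝓝 0) := by
    simpa [div_eq_mul_inv] using
      (tendsto_pow_atTop_nhds_zero_of_abs_lt_one hψ).mul hfib.inv_tendsto_atTop
  rw [← add_zero φ]
  refine (hrem.const_add φ).congr' ?_
  filter_upwards [eventually_gt_atTop 0] with j hj
  rw [← fibRatio_sub_goldenRatio hj, add_sub_cancel]

lemma one_div_fib_mul_fib_add {j k : ℕ} (hj : 0 < j) (hk : 0 < k) :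
    1 / ((j.fib : ℝ) * (j + k).fib) = (-1) ^ j / k.fib * (fibRatio j - fibRatio (j + k)) := by
  have hFk : (k.fib : ℝ) ≠ 0 := Nat.cast_ne_zero.2 (Nat.fib_pos.2 hk).ne'
  have hFj : (j.fib : ℝ) ≠ 0 := Nat.cast_ne_zero.2 (Nat.fib_pos.2 hj).ne'
  have hFjk : ((j + k).fib : ℝ) ≠ 0 := Nat.cast_ne_zero.2 (Nat.fib_pos.2 (by omega)).ne'
  have hsq : ((-1 : ℝ) ^ j) ^ 2 = 1 := by simp [← pow_mul]
  rw [fibRatio_sub_fibRatio_add hj]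
  field_simp
  linear_combination -hsq

lemma neg_one_pow_mul_fibRatio_sub_goldenRatio {j : ℕ} (hj : 0 < j) :
    (-1) ^ j * (fibRatio j - φ) = 1 / (j.fib * φ ^ j) := by
  have hFj : (j.fib : ℝ) ≠ 0 := Nat.cast_ne_zero.2 (Nat.fib_pos.2 hj).ne'
  rw [fibRatio_sub_goldenRatio hj, ← goldenRatio_mul_goldenConj, mul_pow]
  field_simp [goldenRatio_ne_zero]
  simp [← mul_pow, goldenRatio_mul_goldenConj, ← pow_mul]

theorem stmt_9 (m n : ℕ) (hm : 0 < m) (hn : 0 < n) :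
    HasSum (fun i : ℕ =>
      1 / ((Nat.fib (2 * m * i + n) : ℝ) * (Nat.fib (2 * m * (i + 2) + n) : ℝ)))
      ((1 / ((Nat.fib n : ℝ) * (Nat.fib (4 * m) : ℝ))) *
        (2 / ((1 + Real.sqrt 5) / 2) ^ n - (Nat.fib (2 * m) : ℝ) / (Nat.fib (2 * m + n) : ℝ))) := by
  set u : ℕ → ℝ := fun i ↦ fibRatio (2 * m * i + n)
  set c : ℝ := (-1) ^ n / (4 * m).fib
  have hterm (i : ℕ) :
      1 / ((Nat.fib (2 * m * i + n) : ℝ) * (Nat.fib (2 * m * (i + 2) + n) : ℝ))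
        = c * (u i - u (i + 2)) := by
    have hsign : (-1 : ℝ) ^ (2 * m * i + n) = (-1) ^ n := by simp [pow_add, mul_assoc, pow_mul]
    simp only [u, c, show 2 * m * (i + 2) + n = 2 * m * i + n + 4 * m by ring]
    rw [one_div_fib_mul_fib_add (by omega) (by omega), hsign]
  have hu : Tendsto u atTop (𝓝 φ) := tendsto_fibRatio.comp <|
    tendsto_atTop_mono (fun i ↦ show i ≤ 2 * m * i + n by nlinarith) tendsto_id
  refine (hasSum_iff_tendsto_nat_of_nonneg (fun i ↦ by positivity) _).2 ?_
  simp only [hterm, ← mul_sum]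
  convert (tendsto_sum_range_sub_add hu 2).const_mul c using 2
  have hφ := neg_one_pow_mul_fibRatio_sub_goldenRatio hn
  have hratio := fibRatio_sub_fibRatio_add hn (2 * m)
  have hsq : ((-1 : ℝ) ^ n) ^ 2 = 1 := by simp [← pow_mul]
  rw [add_comm n] at hratio
  simp only [sum_range_succ, sum_range_zero, zero_add, u, c, mul_zero, mul_one]
  linear_combination ((-1) ^ n * hratio - 2 * hφ
    + (2 * m).fib / (n.fib * (2 * m + n).fib) * hsq) / (4 * m).fib
end

section
/- For all positive integers m and n, the infinite alternating series sum over i >= 1 of (-1)^i / (F_{2m(i-1)+n} * F_{2m(i+1)+n}) converges to -F_{2m} / (F_n * F_{4m} * F_{2m+n}). -/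
/-!
Write `a i = F_{2mi+n}`. The identity `F_{2m} (F_j + F_{j+4m}) = F_{4m} F_{j+2m}` (the case of even
`k = 2m` of `F_{2k} F_{j+k} = F_k (F_{j+2k} + (-1)^k F_j)`, which reduces to Cassini's identity)
says `F_{2m} (a i + a (i+2)) = F_{4m} a (i+1)`. For such a three-term recurrence the summand
`(-1)^(i+1) / (a i a (i+2))` is the difference `t (i+1) - t i` of the summable sequence
`t i = (-1)^i F_{2m} / (F_{4m} a i a (i+1))`, so the series telescopes to `-t 0`.
-/

namespace Nat

theorem fib_add_two_mul_fib_sub_fib_add_one_sq (k : ℕ) :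
    (fib (k + 2) * fib k - fib (k + 1) ^ 2 : ℤ) = (-1) ^ (k + 1) := by
  have h := Int.fib_succ_mul_fib_pred_sub_fib_sq ((k + 1 : ℕ) : ℤ)
  rwa [show ((k + 1 : ℕ) : ℤ) + 1 = ((k + 2 : ℕ) : ℤ) by push_cast; ring,
    show ((k + 1 : ℕ) : ℤ) - 1 = k by push_cast; ring, Int.natAbs_natCast,
    Int.fib_natCast, Int.fib_natCast, Int.fib_natCast] at h

theorem fib_two_mul_mul_fib_add (k j : ℕ) :
    (fib (2 * k) * fib (j + k) : ℤ) = fib k * (fib (j + 2 * k) + (-1) ^ k * fib j) := by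
  induction j using Nat.twoStepInduction with
  | zero => simp only [zero_add, fib_zero, Nat.cast_zero, mul_zero, add_zero]; ring
  | one =>
    have cassini := fib_add_two_mul_fib_sub_fib_add_one_sq k
    have hle : fib k ≤ 2 * fib (k + 1) := by linarith [fib_le_fib_succ (n := k)]
    rw [fib_add_two] at cassini
    rw [fib_two_mul, add_comm 1, add_comm 1, fib_two_mul_add_one, fib_one,
      Nat.cast_mul, Nat.cast_sub hle]
    push_cast at cassini ⊢
    linear_combination (-fib k : ℤ) * cassini
  | more j ih₀ ih₁ =>
    rw [show j + 2 + k = j + k + 2 by omega, show j + 2 + 2 * k = j + 2 * k + 2 by omega,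
      fib_add_two, fib_add_two, fib_add_two]
    rw [show j + 1 + k = j + k + 1 by omega, show j + 1 + 2 * k = j + 2 * k + 1 by omega] at ih₁
    push_cast
    linear_combination ih₀ + ih₁

theorem fib_four_mul_mul_fib_add_two_mul (m j : ℕ) :
    fib (4 * m) * fib (j + 2 * m) = fib (2 * m) * (fib j + fib (j + 4 * m)) := by
  have h := fib_two_mul_mul_fib_add (2 * m) j
  rw [Even.neg_one_pow ⟨m, by ring⟩, one_mul, show 2 * (2 * m) = 4 * m by ring] at h
  rw [add_comm (fib j)]
  exact_mod_cast h

theorem two_pow_mul_fib_le_fib_add_two_mul (k j : ℕ) : 2 ^ j * fib k ≤ fib (k + 2 * j) := by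
  induction j with
  | zero => simp
  | succ j ih =>
    rw [show k + 2 * (j + 1) = k + 2 * j + 2 by ring, fib_add_two, pow_succ]
    linarith [fib_le_fib_succ (n := k + 2 * j)]

end Nat

open Nat

theorem summable_inv_fib_mul_add {k n : ℕ} (hk : 2 ≤ k) (hn : 0 < n) :
    Summable fun i : ℕ => (fib (k * i + n) : ℝ)⁻¹ := by
  have hfn : (0 : ℝ) < fib n := by exact_mod_cast fib_pos.mpr hn
  refine Summable.of_nonneg_of_le (fun i => by positivity) (fun i => ?_)
    (summable_geometric_two.mul_left (fib n : ℝ)⁻¹)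
  have hgrowth : 2 ^ i * fib n ≤ fib (k * i + n) :=
    (two_pow_mul_fib_le_fib_add_two_mul n i).trans (fib_mono (by nlinarith))
  have hgrowth' : (2 : ℝ) ^ i * fib n ≤ fib (k * i + n) := by exact_mod_cast hgrowth
  calc (fib (k * i + n) : ℝ)⁻¹ ≤ (2 ^ i * fib n : ℝ)⁻¹ := inv_anti₀ (by positivity) hgrowth'
    _ = (fib n : ℝ)⁻¹ * (1 / 2) ^ i := by rw [mul_inv, one_div, inv_pow, mul_comm]

theorem HasSum.succ_sub {G : Type*} [AddCommGroup G] [TopologicalSpace G]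
    [IsTopologicalAddGroup G] {t : ℕ → G} {s : G} (h : HasSum t s) :
    HasSum (fun i => t (i + 1) - t i) (-t 0) := by
  simpa using ((hasSum_nat_add_iff' 1).mpr h).sub h

theorem hasSum_neg_one_pow_div_mul_add_two {a : ℕ → ℝ} {c d : ℝ} (hd : d ≠ 0)
    (ha : ∀ i, a i ≠ 0) (hrec : ∀ i, c * (a i + a (i + 2)) = d * a (i + 1))
    (hsum : Summable fun i => (a i * a (i + 1))⁻¹) :
    HasSum (fun i => (-1) ^ (i + 1) / (a i * a (i + 2))) (-c / (a 0 * d * a 1)) := by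
  set t : ℕ → ℝ := fun i => c / d * ((-1) ^ i * (a i * a (i + 1))⁻¹)
  have ht : Summable t := (Summable.of_norm (by simpa using hsum.abs)).mul_left (c / d)
  have hdiff : (fun i => (-1) ^ (i + 1) / (a i * a (i + 2))) = fun i => t (i + 1) - t i := by
    funext i
    have h₀ := ha i; have h₁ := ha (i + 1); have h₂ := ha (i + 2)
    simp only [t, pow_succ]
    generalize (-1 : ℝ) ^ i = s
    field_simp
    linear_combination s * hrec i
  rw [hdiff]
  have h₀ := ha 0; have h₁ := ha 1
  rw [show -c / (a 0 * d * a 1) = -t 0 by simp only [t]; field_simp]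
  exact ht.hasSum.succ_sub

theorem stmt_13 (m n : ℕ) (hm : 0 < m) (hn : 0 < n) :
    HasSum (fun i : ℕ =>
      (-1 : ℝ) ^ (i + 1) /
        ((Nat.fib (2 * m * i + n) : ℝ) * (Nat.fib (2 * m * (i + 2) + n) : ℝ)))
      (-(Nat.fib (2 * m) : ℝ) /
        ((Nat.fib n : ℝ) * (Nat.fib (4 * m) : ℝ) * (Nat.fib (2 * m + n) : ℝ))) := by
  have hpos : ∀ i, (0 : ℝ) < fib (2 * m * i + n) := fun i => by
    exact_mod_cast fib_pos.mpr (by omega)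
  have hrec (i : ℕ) : (fib (2 * m) : ℝ) * (fib (2 * m * i + n) + fib (2 * m * (i + 2) + n)) =
      fib (4 * m) * fib (2 * m * (i + 1) + n) := by
    have h := fib_four_mul_mul_fib_add_two_mul m (2 * m * i + n)
    rw [show 2 * m * i + n + 2 * m = 2 * m * (i + 1) + n by ring,
      show 2 * m * i + n + 4 * m = 2 * m * (i + 2) + n by ring] at h
    exact_mod_cast h.symm
  have hsum : Summable fun i => ((fib (2 * m * i + n) : ℝ) * fib (2 * m * (i + 1) + n))⁻¹ := by
    refine Summable.of_nonneg_of_le (fun i => by positivity [hpos i, hpos (i + 1)]) (fun i => ?_)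
      (summable_inv_fib_mul_add (k := 2 * m) (by omega) hn)
    have h1 : (1 : ℝ) ≤ fib (2 * m * (i + 1) + n) := by exact_mod_cast fib_pos.mpr (by omega)
    rw [mul_inv]
    exact mul_le_of_le_one_right (inv_nonneg.mpr (hpos i).le) (inv_le_one_of_one_le₀ h1)
  have hd : (fib (4 * m) : ℝ) ≠ 0 := by exact_mod_cast (fib_pos.mpr (by omega)).ne'
  simpa using hasSum_neg_one_pow_div_mul_add_two hd (fun i => (hpos i).ne') hrec hsum
end

section
/- Let (w_k) be a Horadam sequence: w_0 = a, w_1 = b, w_{k+2} = p w_{k+1} - q w_k (with a, b, p, q rational, q ≠ 0), extended to all integer indices, and let (u_k) be the Lucas sequence of the first kind with the same p, q. Then for all integers n, r, s, w_n * w_{n+r+s} - w_{n+r} * w_{n+s} = e_w * q^n * u_r * u_s, where e_w = p*a*b - q*a^2 - b^2. -/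
/-!
Every solution of the recurrence is determined by two consecutive values, so a shifted solution
`t ↦ w (n + t)` is the combination `u t * w (n + 1) - q * u (t - 1) * w n` of the Lucas sequence and
its shift. Substituting this into `w n * w (n + r + s) - w (n + r) * w (n + s)` leaves
`(p w_n w_{n+1} - q w_n² - w_{n+1}²) u_r u_s`, and that quadratic form in consecutive terms is
multiplied by `q` at each step, so it equals `e_w q^n`.
-/

variable {K : Type*} [Field K]

def HoradamRec (p q : K) (w : ℤ → K) : Prop :=
  ∀ k : ℤ, w (k + 2) = p * w (k + 1) - q * w k

namespace HoradamRec

variable {p q : K} {u v w : ℤ → K}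

theorem comp_add_left (hw : HoradamRec p q w) (n : ℤ) : HoradamRec p q (fun t => w (n + t)) :=
  fun k => by simpa only [add_assoc] using hw (n + k)

theorem comp_sub_one (hw : HoradamRec p q w) : HoradamRec p q (fun t => w (t - 1)) :=
  fun k => by simpa only [sub_add_eq_add_sub, add_sub_assoc] using hw (k - 1)

theorem linear_comb (hv : HoradamRec p q v) (hw : HoradamRec p q w) (c d : K) :
    HoradamRec p q (fun t => c * v t + d * w t) :=
  fun k => by dsimp only; rw [hv k, hw k]; ring

theorem ext (hq : q ≠ 0) (hv : HoradamRec p q v) (hw : HoradamRec p q w)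
    (h0 : v 0 = w 0) (h1 : v 1 = w 1) : v = w := by
  suffices h : ∀ k : ℤ, v k = w k ∧ v (k + 1) = w (k + 1) from funext fun k => (h k).1
  intro k
  induction k using Int.induction_on with
  | zero => exact ⟨h0, h1⟩
  | succ k ih =>
    refine ⟨ih.2, ?_⟩
    rw [add_assoc, one_add_one_eq_two, hv, hw, ih.1, ih.2]
  | pred k ih =>
    refine ⟨?_, by simpa using ih.1⟩
    have hvk := hv (-k - 1)
    have hwk := hw (-k - 1)
    rw [show -(k : ℤ) - 1 + 2 = -k + 1 by ring, show -(k : ℤ) - 1 + 1 = -k by ring] at hvk hwk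
    apply mul_left_cancel₀ hq
    linear_combination hvk - hwk - ih.2 + p * ih.1

theorem apply_neg_one (hu : HoradamRec p q u) (hq : q ≠ 0) (h0 : u 0 = 0) (h1 : u 1 = 1) :
    u (-1) = -q⁻¹ := by
  have h := hu (-1)
  norm_num [h0, h1] at h
  field_simp
  linear_combination h

theorem apply_add (hw : HoradamRec p q w) (hq : q ≠ 0) (hu : HoradamRec p q u) (hu0 : u 0 = 0)
    (hu1 : u 1 = 1) (n t : ℤ) :
    w (n + t) = u t * w (n + 1) - q * u (t - 1) * w n := by
  have key : (fun t => w (n + t)) = fun t => w (n + 1) * u t + (-q * w n) * u (t - 1) :=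
    ext hq (hw.comp_add_left n) (hu.linear_comb hu.comp_sub_one _ _)
      (by rw [add_zero, zero_sub, hu0, hu.apply_neg_one hq hu0 hu1]; field_simp; ring) (by simp [hu0, hu1])
  rw [congrFun key t]
  ring

theorem form_eq_zpow (hw : HoradamRec p q w) (hq : q ≠ 0) (n : ℤ) :
    p * w n * w (n + 1) - q * w n ^ 2 - w (n + 1) ^ 2
      = (p * w 0 * w 1 - q * w 0 ^ 2 - w 1 ^ 2) * q ^ n := by
  set f : ℤ → K := fun n => p * w n * w (n + 1) - q * w n ^ 2 - w (n + 1) ^ 2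
  have step : ∀ k, f (k + 1) = q * f k := fun k => by
    simp only [f, add_assoc, one_add_one_eq_two, hw k]
    ring
  show f n = f 0 * q ^ n
  induction n using Int.induction_on with
  | zero => simp
  | succ k ih => rw [step, ih, zpow_add_one₀ hq]; ring
  | pred k ih =>
    have hk := step (-k - 1)
    rw [sub_add_cancel, ih] at hk
    rw [zpow_sub_one₀ hq]
    field_simp
    linear_combination -hk

end HoradamRec

theorem stmt_17 (a b p q : ℚ) (hq : q ≠ 0)
    (w u : ℤ → ℚ)
    (hw0 : w 0 = a) (hw1 : w 1 = b)
    (hu0 : u 0 = 0) (hu1 : u 1 = 1)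
    (hwrec : ∀ k : ℤ, w (k + 2) = p * w (k + 1) - q * w k)
    (hurec : ∀ k : ℤ, u (k + 2) = p * u (k + 1) - q * u k)
    (n r s : ℤ) :
    w n * w (n + r + s) - w (n + r) * w (n + s)
      = (p * a * b - q * a ^ 2 - b ^ 2) * q ^ n * u r * u s := by
  have hw : HoradamRec p q w := hwrec
  have hu : HoradamRec p q u := hurec
  have hrs := hw.apply_add hq hu hu0 hu1 n (r + s)
  have hr := hw.apply_add hq hu hu0 hu1 n r
  have hs := hw.apply_add hq hu hu0 hu1 n s
  have hurs := hu.apply_add hq hu hu0 hu1 r s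
  have hurs' := hu.apply_add hq hu hu0 hu1 (r - 1) s
  have hur := hu (r - 1)
  rw [← add_assoc] at hrs
  rw [sub_add_eq_add_sub, sub_add_cancel] at hurs'
  rw [sub_add_cancel, show r - 1 + 2 = r + 1 by ring] at hur
  rw [← hw0, ← hw1, ← hw.form_eq_zpow hq n, hrs, hr, hs, hurs, hurs', hur]
  ring
end

section
/- Let (u_k) and (v_k) be the Lucas sequences of the first and second kind for parameters p, q (rational, q ≠ 0), extended to integer indices. Then for all positive integers m, k, N, assuming all the denominators u_{mi}, u_{m(i+N)} for 1 ≤ i ≤ 2k and u_{mi}, u_{m(i+2k)} for 1 ≤ i ≤ N and u_{2km} are nonzero, the sum over i from 1 to N of q^{mi} / (u_{mi} * u_{m(i+2k)}) equals (1/(2 * u_{2km})) * the sum over i from 1 to 2k of (v_{mi}/u_{mi} - v_{m(i+N)}/u_{m(i+N)}). -/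
/-!
The Casoratian `v a * u (a + c) - u a * v (a + c)` of the two Lucas sequences equals
`2 * q ^ a * u c`: as a function of `c` it satisfies the Lucas recurrence and has the initial
values `0` and `2 * q ^ a`. Dividing by `u a * u (a + c)` writes each summand as
`(f i - f (i + 2k)) / (2 u_{2km})` with `f i = v_{mi} / u_{mi}`, and a sum of differences
`f i - f (i + b)` over `1 ≤ i ≤ a` is symmetric in `a` and `b`.
-/

open Finset

theorem Finset.sum_range_sub_shift_comm {G : Type*} [AddCommGroup G] (f : ℕ → G) (a b : ℕ) :
    ∑ i ∈ range a, (f i - f (b + i)) = ∑ i ∈ range b, (f i - f (a + i)) := by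
  have hab := sum_range_add f a b
  have hba := sum_range_add f b a
  rw [add_comm b a] at hba
  rw [sum_sub_distrib, sum_sub_distrib, sub_eq_sub_iff_add_eq_add, ← hab, ← hba]

theorem Finset.sum_Icc_one_eq_sum_range {M : Type*} [AddCommMonoid M] (f : ℕ → M) (n : ℕ) :
    ∑ i ∈ Icc 1 n, f i = ∑ i ∈ range n, f (i + 1) := by
  rw [← Ico_add_one_right_eq_Icc, sum_Ico_eq_sum_range, Nat.add_sub_cancel]
  simp only [add_comm]

theorem Finset.sum_Icc_sub_shift_comm {G : Type*} [AddCommGroup G] (f : ℕ → G) (a b : ℕ) :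
    ∑ i ∈ Icc 1 a, (f i - f (i + b)) = ∑ i ∈ Icc 1 b, (f i - f (i + a)) := by
  simpa only [sum_Icc_one_eq_sum_range, add_comm, add_left_comm, add_assoc] using
    sum_range_sub_shift_comm (fun i ↦ f (i + 1)) a b

section LucasSequences

variable {R : Type*} [CommRing R]

def IsLucasRec (p q : R) (x : ℕ → R) : Prop :=
  ∀ n, x (n + 2) = p * x (n + 1) - q * x n

theorem IsLucasRec.ext {p q : R} {x y : ℕ → R} (hx : IsLucasRec p q x) (hy : IsLucasRec p q y)
    (h0 : x 0 = y 0) (h1 : x 1 = y 1) : x = y := by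
  funext n
  induction n using Nat.twoStepInduction with
  | zero => exact h0
  | one => exact h1
  | more n ih0 ih1 => rw [hx, hy, ih0, ih1]

theorem lucas_casoratian_succ {p q : R} {u v : ℕ → R} (hu0 : u 0 = 0) (hu1 : u 1 = 1)
    (hv0 : v 0 = 2) (hv1 : v 1 = p) (hu : IsLucasRec p q u) (hv : IsLucasRec p q v) (a : ℕ) :
    v a * u (a + 1) - u a * v (a + 1) = 2 * q ^ a := by
  induction a with
  | zero => simp [hu0, hu1, hv0, hv1]
  | succ n ih =>
    rw [hu, hv, pow_succ]
    linear_combination q * ih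

theorem lucas_casoratian {p q : R} {u v : ℕ → R} (hu0 : u 0 = 0) (hu1 : u 1 = 1)
    (hv0 : v 0 = 2) (hv1 : v 1 = p) (hu : IsLucasRec p q u) (hv : IsLucasRec p q v) (a c : ℕ) :
    v a * u (a + c) - u a * v (a + c) = 2 * q ^ a * u c := by
  have hrec : IsLucasRec p q fun c ↦ v a * u (a + c) - u a * v (a + c) := fun c ↦ by
    simp only [← add_assoc, hu (a + c), hv (a + c)]
    ring
  have hrec' : IsLucasRec p q fun c ↦ 2 * q ^ a * u c := fun c ↦ by
    simp only [hu c]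
    ring
  refine congrFun (hrec.ext hrec' ?_ ?_) c
  · simp [hu0, mul_comm]
  · simp [hu1, lucas_casoratian_succ hu0 hu1 hv0 hv1 hu hv]

theorem lucas_q_pow_div_eq {K : Type*} [Field K] {p q : K} {u v : ℕ → K} (hu0 : u 0 = 0)
    (hu1 : u 1 = 1) (hv0 : v 0 = 2) (hv1 : v 1 = p) (hu : IsLucasRec p q u)
    (hv : IsLucasRec p q v) (h2 : (2 : K) ≠ 0) {a c : ℕ} (ha : u a ≠ 0) (hac : u (a + c) ≠ 0)
    (hc : u c ≠ 0) :
    q ^ a / (u a * u (a + c)) = 1 / (2 * u c) * (v a / u a - v (a + c) / u (a + c)) := by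
  rw [div_sub_div _ _ ha hac, lucas_casoratian hu0 hu1 hv0 hv1 hu hv]
  field_simp

end LucasSequences

theorem stmt_18_general (p q : ℚ)
    (u v : ℕ → ℚ)
    (hu0 : u 0 = 0) (hu1 : u 1 = 1) (hv0 : v 0 = 2) (hv1 : v 1 = p)
    (hurec : ∀ k : ℕ, u (k + 2) = p * u (k + 1) - q * u k)
    (hvrec : ∀ k : ℕ, v (k + 2) = p * v (k + 1) - q * v k)
    (m k N : ℕ)
    (hden2 : ∀ i ∈ Finset.Icc 1 N, u (m * i) ≠ 0 ∧ u (m * (i + 2 * k)) ≠ 0)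
    (hden3 : u (2 * k * m) ≠ 0) :
    ∑ i ∈ Finset.Icc 1 N, q ^ (m * i) / (u (m * i) * u (m * (i + 2 * k)))
      = (1 / (2 * u (2 * k * m))) *
          ∑ i ∈ Finset.Icc 1 (2 * k),
            (v (m * i) / u (m * i) - v (m * (i + N)) / u (m * (i + N))) := by
  have hterm : ∀ i ∈ Icc 1 N, q ^ (m * i) / (u (m * i) * u (m * (i + 2 * k))) =
      1 / (2 * u (2 * k * m)) *
        (v (m * i) / u (m * i) - v (m * (i + 2 * k)) / u (m * (i + 2 * k))) := by
    intro i hi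
    have hshift : m * i + 2 * k * m = m * (i + 2 * k) := by ring
    obtain ⟨hi0, hi2k⟩ := hden2 i hi
    have := lucas_q_pow_div_eq hu0 hu1 hv0 hv1 hurec hvrec two_ne_zero hi0
      (hshift ▸ hi2k) hden3
    rwa [hshift] at this
  rw [sum_congr rfl hterm, ← mul_sum]
  congr 1
  exact sum_Icc_sub_shift_comm (fun i ↦ v (m * i) / u (m * i)) N (2 * k)

theorem stmt_18 (p q : ℚ) (hq : q ≠ 0)
    (u v : ℕ → ℚ)
    (hu0 : u 0 = 0) (hu1 : u 1 = 1) (hv0 : v 0 = 2) (hv1 : v 1 = p)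
    (hurec : ∀ k : ℕ, u (k + 2) = p * u (k + 1) - q * u k)
    (hvrec : ∀ k : ℕ, v (k + 2) = p * v (k + 1) - q * v k)
    (m k N : ℕ) (hm : 0 < m) (hk : 0 < k) (hN : 0 < N)
    (hden1 : ∀ i ∈ Finset.Icc 1 (2 * k), u (m * i) ≠ 0 ∧ u (m * (i + N)) ≠ 0)
    (hden2 : ∀ i ∈ Finset.Icc 1 N, u (m * i) ≠ 0 ∧ u (m * (i + 2 * k)) ≠ 0)
    (hden3 : u (2 * k * m) ≠ 0) :
    ∑ i ∈ Finset.Icc 1 N, q ^ (m * i) / (u (m * i) * u (m * (i + 2 * k)))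
      = (1 / (2 * u (2 * k * m))) *
          ∑ i ∈ Finset.Icc 1 (2 * k),
            (v (m * i) / u (m * i) - v (m * (i + N)) / u (m * (i + N))) :=
  stmt_18_general p q u v hu0 hu1 hv0 hv1 hurec hvrec m k N hden2 hden3
end
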